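/- Let λ be a real number and define the sequence (a_n(λ))_{n∈ℕ} by a_0(λ) = 0, a_1(λ) = λ, and a_{n+2}(λ) = ((n² − λ²)/((n+2)(n+1)))·a_n(λ) for all n ≥ 0. Then for every x ∈ (−1,1), the power series Σ_{n≥0} a_n(λ)·x^n converges and its sum equals sin(λ·arcsin(x)). -/

import Mathlib

/-!
Both `S x = ∑ aₙ xⁿ` and `sin (λ arcsin x)` solve the Chebyshev equation
`(1 - x²) y'' - x y' + λ² y = 0` with `y 0 = 0`, `y' 0 = λ`: for `S` this is exactly the
recurrence, read coefficientwise. The recurrence ratio tends to `1`, so the coefficients are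
bounded and `S` may be differentiated termwise twice on `(-1, 1)`. After substituting `x = sin θ`
the equation becomes `y'' = -λ² y`, and for the difference of the two solutions the energy
`y'² + λ² y²` is conserved, hence identically zero.
-/

open Real Filter Asymptotics Set

theorem isBigO_one_of_eventually_abs_add_two_le {a : ℕ → ℝ}
    (h : ∀ᶠ n in atTop, |a (n + 2)| ≤ |a n|) : a =O[atTop] fun _ => (1 : ℝ) := by
  obtain ⟨N, hN⟩ := eventually_atTop.1 h
  have bound : ∀ m, |a (N + m)| ≤ max |a N| |a (N + 1)| := by
    intro m
    induction m using Nat.strong_induction_on with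
    | _ m ih =>
      match m with
      | 0 => exact le_max_left _ _
      | 1 => exact le_max_right _ _
      | m + 2 => exact (hN (N + m) (by omega)).trans (ih m (by omega))
  refine IsBigO.of_bound (max |a N| |a (N + 1)|) ?_
  filter_upwards [eventually_ge_atTop N] with n hn
  obtain ⟨m, rfl⟩ := Nat.exists_eq_add_of_le hn
  simpa using bound m

theorem tsum_mul_zero_pow (c : ℕ → ℝ) : ∑' n, c n * 0 ^ n = c 0 := by
  rw [tsum_eq_single 0 fun n hn => by simp [hn]]
  simp

section PowerSeries

variable {c : ℕ → ℝ} {k : ℕ}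

def derivCoeff (c : ℕ → ℝ) (n : ℕ) : ℝ := (n + 1) * c (n + 1)

theorem summable_norm_mul_pow_of_isBigO (hc : c =O[atTop] fun n => (n : ℝ) ^ k) {r : ℝ}
    (hr : |r| < 1) : Summable fun n => ‖c n * r ^ n‖ :=
  summable_of_isBigO_nat (summable_pow_mul_geometric_of_norm_lt_one k hr)
    (hc.mul (isBigO_refl _ _)).norm_left

theorem isBigO_natCast_pow_mul (hc : c =O[atTop] fun n => (n : ℝ) ^ k) (j : ℕ) :
    (fun n : ℕ => (n : ℝ) ^ j * c n) =O[atTop] fun n => (n : ℝ) ^ (j + k) := by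
  simpa only [pow_add] using (isBigO_refl (fun n : ℕ => (n : ℝ) ^ j) atTop).mul hc

theorem derivCoeff_isBigO (hc : c =O[atTop] fun n => (n : ℝ) ^ k) :
    derivCoeff c =O[atTop] fun n => (n : ℝ) ^ (k + 1) := by
  have shift : (fun n : ℕ => ((n + 1 : ℕ) : ℝ)) =O[atTop] fun n => (n : ℝ) := by
    refine IsBigO.of_bound 2 ?_
    filter_upwards [eventually_ge_atTop 1] with n hn
    have : (1 : ℝ) ≤ n := by exact_mod_cast hn
    simp only [Nat.cast_add, Nat.cast_one, norm_eq_abs]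
    rw [abs_of_nonneg (by positivity), abs_of_nonneg (by positivity)]
    linarith
  have := ((isBigO_natCast_pow_mul hc 1).comp_tendsto (tendsto_add_atTop_nat 1)).trans
    (shift.pow (1 + k))
  change (fun n : ℕ => ((n : ℝ) + 1) * c (n + 1)) =O[atTop] fun n => (n : ℝ) ^ (k + 1)
  simpa [Function.comp_def, add_comm k 1] using this

theorem hasDerivAt_tsum_mul_pow (hc : c =O[atTop] fun n => (n : ℝ) ^ k) {x : ℝ} (hx : |x| < 1) :
    HasDerivAt (fun y => ∑' n, c n * y ^ n) (∑' n, derivCoeff c n * x ^ n) x := by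
  obtain ⟨r, hxr, hr1⟩ := exists_between hx
  have hr0 : 0 ≤ r := (abs_nonneg x).trans hxr.le
  have hr : |r| < 1 := by rwa [abs_of_nonneg hr0]
  have hy₀ : (0 : ℝ) ∈ Ioo (-r) r := ⟨by linarith [abs_nonneg x], by linarith [abs_nonneg x]⟩
  -- Splitting off `c 0` lets the termwise derivatives be written without `n - 1` exponents.
  have tail : HasDerivAt (fun y => ∑' n, c (n + 1) * y ^ (n + 1))
      (∑' n, derivCoeff c n * x ^ n) x := by
    refine hasDerivAt_tsum_of_isPreconnected (g := fun n y => c (n + 1) * y ^ (n + 1))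
      (g' := fun n y => derivCoeff c n * y ^ n)
      (summable_norm_mul_pow_of_isBigO (derivCoeff_isBigO hc) hr) isOpen_Ioo isPreconnected_Ioo
      (fun n y _ => ?_) (fun n y hy => ?_) hy₀ (by simp) (abs_lt.1 hxr)
    · refine ((hasDerivAt_pow (n + 1) y).const_mul (c (n + 1))).congr_deriv ?_
      simp only [derivCoeff]; push_cast; ring
    · rw [norm_mul, norm_mul, norm_pow, norm_pow]
      gcongr
      rw [norm_eq_abs, norm_eq_abs, abs_of_nonneg hr0]
      exact (abs_lt.2 hy).le
  refine (tail.const_add (c 0)).congr_of_eventuallyEq ?_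
  filter_upwards [Ioo_mem_nhds (abs_lt.1 hx).1 (abs_lt.1 hx).2] with y hy
  simpa using (summable_norm_mul_pow_of_isBigO hc (abs_lt.2 hy)).of_norm.tsum_eq_zero_add

end PowerSeries

theorem eqOn_zero_of_hasDerivAt_hasDerivAt_neg_mul {s : Set ℝ} {h h' : ℝ → ℝ} {μ t₀ : ℝ}
    (hμ : 0 ≤ μ) (hs : IsOpen s) (hs' : IsPreconnected s)
    (hh : ∀ t ∈ s, HasDerivAt h (h' t) t) (hh' : ∀ t ∈ s, HasDerivAt h' (-(μ * h t)) t)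
    (ht₀ : t₀ ∈ s) (h0 : h t₀ = 0) (h0' : h' t₀ = 0) : EqOn h 0 s := by
  have energy_deriv : ∀ t ∈ s, HasDerivAt (fun t => h' t ^ 2 + μ * h t ^ 2) 0 t := by
    intro t ht
    refine (((hh' t ht).fun_pow 2).fun_add (((hh t ht).fun_pow 2).const_mul μ)).congr_deriv ?_
    norm_num
    ring
  have energy_eq_zero : ∀ t ∈ s, h' t ^ 2 + μ * h t ^ 2 = 0 := by
    intro t ht
    rw [hs.is_const_of_deriv_eq_zero hs'
      (fun t ht => (energy_deriv t ht).differentiableAt.differentiableWithinAt)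
      (fun t ht => (energy_deriv t ht).deriv) ht ht₀, h0, h0']
    ring
  have deriv_eq_zero : EqOn (deriv h) 0 s := by
    intro t ht
    rw [(hh t ht).deriv, Pi.zero_apply]
    nlinarith [energy_eq_zero t ht, sq_nonneg (h' t), mul_nonneg hμ (sq_nonneg (h t))]
  intro t ht
  rw [hs.is_const_of_deriv_eq_zero hs'
    (fun t ht => (hh t ht).differentiableAt.differentiableWithinAt) deriv_eq_zero ht ht₀, h0,
    Pi.zero_apply]

section Recurrence

variable {lam : ℝ} {a : ℕ → ℝ}

theorem isBigO_one_of_recurrence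
    (hrec : ∀ n : ℕ, a (n + 2) = (((n : ℝ) ^ 2 - lam ^ 2) / (((n : ℝ) + 2) * ((n : ℝ) + 1))) * a n)
    : a =O[atTop] fun _ => (1 : ℝ) := by
  refine isBigO_one_of_eventually_abs_add_two_le ?_
  filter_upwards [(tendsto_natCast_atTop_atTop (R := ℝ)).eventually_ge_atTop (lam ^ 2)] with n hn
  have hpos : (0 : ℝ) < ((n : ℝ) + 2) * ((n : ℝ) + 1) := by positivity
  rw [hrec, abs_mul]
  refine mul_le_of_le_one_left (abs_nonneg _) ?_
  rw [abs_div, abs_of_pos hpos, div_le_one hpos, abs_le]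
  constructor <;> nlinarith [sq_nonneg lam, (Nat.cast_nonneg n : (0 : ℝ) ≤ n)]

theorem chebyshev_equation_tsum
    (hrec : ∀ n : ℕ, a (n + 2) = (((n : ℝ) ^ 2 - lam ^ 2) / (((n : ℝ) + 2) * ((n : ℝ) + 1))) * a n)
    {x : ℝ} (hx : |x| < 1) :
    (1 - x ^ 2) * ∑' n, derivCoeff (derivCoeff a) n * x ^ n - x * ∑' n, derivCoeff a n * x ^ n
      + lam ^ 2 * ∑' n, a n * x ^ n = 0 := by
  have ha : a =O[atTop] fun n => (n : ℝ) ^ 0 := by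
    simpa using isBigO_one_of_recurrence hrec
  have summable_moment : ∀ j : ℕ, Summable fun n : ℕ => (n : ℝ) ^ j * a n * x ^ n := fun j =>
    (summable_norm_mul_pow_of_isBigO (isBigO_natCast_pow_mul ha j) hx).of_norm
  obtain ⟨A₀, hA₀⟩ : Summable fun n => a n * x ^ n := by simpa using summable_moment 0
  obtain ⟨A₁, hA₁⟩ : Summable fun n : ℕ => (n : ℝ) * a n * x ^ n := by
    simpa using summable_moment 1
  obtain ⟨A₂, hA₂⟩ := summable_moment 2
  have hS₂ : ∑' n, derivCoeff (derivCoeff a) n * x ^ n = A₂ - lam ^ 2 * A₀ := by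
    refine ((hA₂.sub (hA₀.mul_left (lam ^ 2))).congr_fun fun n => ?_).tsum_eq
    have hpos : ((n : ℝ) + 2) * ((n : ℝ) + 1) ≠ 0 := by positivity
    simp only [derivCoeff, hrec]
    push_cast
    field_simp
    ring
  have hx_mul_S₁ : x * ∑' n, derivCoeff a n * x ^ n = A₁ := by
    rw [← tsum_mul_left]
    refine (((hasSum_nat_add_iff' 1).2 hA₁).congr_fun fun n => ?_).tsum_eq.trans (by simp)
    simp only [derivCoeff]
    push_cast
    ring
  have hx_sq_mul_S₂ : x ^ 2 * ∑' n, derivCoeff (derivCoeff a) n * x ^ n = A₂ - A₁ := by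
    rw [← tsum_mul_left]
    refine (((hasSum_nat_add_iff' 2).2 (hA₂.sub hA₁)).congr_fun fun n => ?_).tsum_eq.trans
      (by simp [Finset.sum_range_succ])
    simp only [derivCoeff]
    push_cast
    ring
  linear_combination hS₂ - hx_sq_mul_S₂ - hx_mul_S₁ + lam ^ 2 * hA₀.tsum_eq

theorem tsum_mul_pow_eq_sin_mul_arcsin (h0 : a 0 = 0) (h1 : a 1 = lam)
    (hrec : ∀ n : ℕ, a (n + 2) = (((n : ℝ) ^ 2 - lam ^ 2) / (((n : ℝ) + 2) * ((n : ℝ) + 1))) * a n)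
    {x : ℝ} (hx : |x| < 1) :
    ∑' n, a n * x ^ n = sin (lam * arcsin x) := by
  have ha : a =O[atTop] fun n => (n : ℝ) ^ 0 := by simpa using isBigO_one_of_recurrence hrec
  set S := fun y : ℝ => ∑' n, a n * y ^ n
  set S₁ := fun y : ℝ => ∑' n, derivCoeff a n * y ^ n
  set S₂ := fun y : ℝ => ∑' n, derivCoeff (derivCoeff a) n * y ^ n
  have hsin : ∀ θ ∈ Ioo (-(π / 2)) (π / 2), |sin θ| < 1 := by
    intro θ hθ
    rw [← sq_lt_one_iff_abs_lt_one]
    nlinarith [cos_pos_of_mem_Ioo hθ, sin_sq_add_cos_sq θ]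
  have key : EqOn (fun θ => S (sin θ) - sin (lam * θ)) 0 (Ioo (-(π / 2)) (π / 2)) := by
    refine eqOn_zero_of_hasDerivAt_hasDerivAt_neg_mul
      (h' := fun θ => S₁ (sin θ) * cos θ - lam * cos (lam * θ)) (sq_nonneg lam) isOpen_Ioo
      isPreconnected_Ioo (fun θ hθ => ?_) (fun θ hθ => ?_) (t₀ := 0)
      ⟨by linarith [pi_pos], by linarith [pi_pos]⟩ ?_ ?_
    · have hS := (hasDerivAt_tsum_mul_pow ha (hsin θ hθ)).comp θ (hasDerivAt_sin θ)
      have hsinl := ((hasDerivAt_id θ).const_mul lam).sin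
      refine (hS.fun_sub hsinl).congr_deriv ?_
      simp [S₁, mul_comm]
    · have hS₁ := (hasDerivAt_tsum_mul_pow (derivCoeff_isBigO ha) (hsin θ hθ)).comp θ
        (hasDerivAt_sin θ)
      have hcosl := (((hasDerivAt_id θ).const_mul lam).cos).const_mul lam
      have cheb := chebyshev_equation_tsum hrec (hsin θ hθ)
      refine ((hS₁.fun_mul (hasDerivAt_cos θ)).fun_sub hcosl).congr_deriv ?_
      simp only [S, Function.comp_apply, id]
      linear_combination cheb + S₂ (sin θ) * sin_sq_add_cos_sq θ
    · simp [S, tsum_mul_zero_pow, h0]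
    · simp [S₁, tsum_mul_zero_pow, derivCoeff, h1]
  have := key ⟨neg_pi_div_two_lt_arcsin.2 (abs_lt.1 hx).1, arcsin_lt_pi_div_two.2 (abs_lt.1 hx).2⟩
  simpa [sin_arcsin (abs_lt.1 hx).1.le (abs_lt.1 hx).2.le, sub_eq_zero] using this

end Recurrence

/-- The sequence defined by `a 0 = 0`, `a 1 = λ`, and
`a (n+2) = ((n² - λ²)/((n+2)(n+1))) * a n` gives, for every `x ∈ (-1,1)`, a
convergent power series `Σ a n * x^n` whose sum is `sin (λ * arcsin x)`. -/
theorem sin_lambda_arcsin_powerSeries (lam : ℝ) (a : ℕ → ℝ)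
    (h0 : a 0 = 0) (h1 : a 1 = lam)
    (hrec : ∀ n : ℕ, a (n + 2) = (((n : ℝ) ^ 2 - lam ^ 2) / (((n : ℝ) + 2) * ((n : ℝ) + 1))) * a n)
    (x : ℝ) (hx : x ∈ Set.Ioo (-1 : ℝ) 1) :
    HasSum (fun n : ℕ => a n * x ^ n) (Real.sin (lam * Real.arcsin x)) := by
  have hx' : |x| < 1 := abs_lt.2 hx
  rw [← tsum_mul_pow_eq_sin_mul_arcsin h0 h1 hrec hx']
  exact (summable_norm_mul_pow_of_isBigO (k := 0) (by simpa using isBigO_one_of_recurrence hrec)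
    hx').of_norm.hasSum
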